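/- arXiv:2206.03188 — 5 statements merged into one kernel-verified Lean document; each statement's English description precedes it below -/
import Mathlib

section
/- Write Q_N^{(g)} in 2×2 block form with 2^{N-1}×2^{N-1} blocks E_N, F_N, G_N, H_N (top-left, top-right, bottom-left, bottom-right). Then Q_{N+1}^{(g)}, viewed as a 4×4 array of 2^{N-1}×2^{N-1} blocks, equals [[a00^00 E_N, a01^01 F_N, a00^10 E_N, a01^11 F_N],[a00^00 G_N, a01^01 H_N, a00^10 G_N, a01^11 H_N],[a10^00 E_N, a11^01 F_N, a10^10 E_N, a11^11 F_N],[a10^00 G_N, a11^01 H_N, a10^10 G_N, a11^11 H_N]]. -/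
/-!
Entrywise, `Q_{N+2} = (I₂ ⊗ Q_{N+1}) (Q^{(l)} ⊗ I)` is a sum over an intermediate configuration
`(d₁, d₂, z)`. The identity factors force `d₁ = b₁` and `z = y`, and the vanishing of
`a_{kl}^{ij}` for `j ≠ l` forces `d₂ = c₂`, leaving the single term `a_{b₁c₂}^{c₁c₂} Q_{N+1}(b₂x, c₂y)`.
-/

open Matrix Kronecker

/-- Configuration space of `N` sites, each holding a state in `{0,1}`. -/
abbrev Conf (N : ℕ) := Fin N → Fin 2

/-- `Fin 2 × Conf N ≃ Conf (N+1)` by prepending the first bit. -/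
def confEquiv (N : ℕ) : Fin 2 × Conf N ≃ Conf (N + 1) :=
  Fin.consEquiv (fun _ => Fin 2)

/-- `(Fin 2 × Fin 2) × Conf N ≃ Conf (N+2)` by prepending the first two bits. -/
def confEquiv2 (N : ℕ) : (Fin 2 × Fin 2) × Conf N ≃ Conf (N + 2) :=
  (((Equiv.prodAssoc (Fin 2) (Fin 2) (Conf N)).trans
    ((Equiv.refl (Fin 2)).prodCongr (confEquiv N))).trans (confEquiv (N + 1)))

/-- The global operator `Q_N^{(g)}`, defined by `Q_1 = I_2` and
`Q_{N+1} = (I_2 ⊗ Q_N) (Q^{(l)} ⊗ I_{2^{N-1}})`. -/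
def Qg {R : Type*} [CommRing R] (Ql : Matrix (Fin 2 × Fin 2) (Fin 2 × Fin 2) R) :
    (N : ℕ) → Matrix (Conf N) (Conf N) R
  | 0 => 1
  | 1 => 1
  | (N + 2) =>
      (Matrix.reindex (confEquiv (N + 1)) (confEquiv (N + 1))
          ((1 : Matrix (Fin 2) (Fin 2) R) ⊗ₖ Qg Ql (N + 1))) *
      (Matrix.reindex (confEquiv2 N) (confEquiv2 N)
          (Ql ⊗ₖ (1 : Matrix (Conf N) (Conf N) R)))

/-- Top-left block `E`. -/
def blockTL {R : Type*} [CommRing R] {N : ℕ}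
    (M : Matrix (Conf (N + 1)) (Conf (N + 1)) R) : Matrix (Conf N) (Conf N) R :=
  Matrix.of fun x y => M (Fin.cons 0 x) (Fin.cons 0 y)

/-- Top-right block `F`. -/
def blockTR {R : Type*} [CommRing R] {N : ℕ}
    (M : Matrix (Conf (N + 1)) (Conf (N + 1)) R) : Matrix (Conf N) (Conf N) R :=
  Matrix.of fun x y => M (Fin.cons 0 x) (Fin.cons 1 y)

/-- Bottom-left block `G`. -/
def blockBL {R : Type*} [CommRing R] {N : ℕ}
    (M : Matrix (Conf (N + 1)) (Conf (N + 1)) R) : Matrix (Conf N) (Conf N) R :=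
  Matrix.of fun x y => M (Fin.cons 1 x) (Fin.cons 0 y)

/-- Bottom-right block `H`. -/
def blockBR {R : Type*} [CommRing R] {N : ℕ}
    (M : Matrix (Conf (N + 1)) (Conf (N + 1)) R) : Matrix (Conf N) (Conf N) R :=
  Matrix.of fun x y => M (Fin.cons 1 x) (Fin.cons 1 y)


@[simp] lemma confEquiv_symm_cons (N : ℕ) (b : Fin 2) (x : Conf N) :
    (confEquiv N).symm (Fin.cons b x) = (b, x) :=
  (confEquiv N).symm_apply_eq.mpr rfl

@[simp] lemma confEquiv2_apply (N : ℕ) (b c : Fin 2) (x : Conf N) :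
    confEquiv2 N ((b, c), x) = Fin.cons b (Fin.cons c x) := rfl

@[simp] lemma confEquiv2_symm_cons_cons (N : ℕ) (b c : Fin 2) (x : Conf N) :
    (confEquiv2 N).symm (Fin.cons b (Fin.cons c x)) = ((b, c), x) :=
  (confEquiv2 N).symm_apply_eq.mpr rfl

section
variable {R : Type*} [MulZeroOneClass R]

lemma reindex_one_kronecker_apply {N : ℕ} (M : Matrix (Conf N) (Conf N) R)
    (b c : Fin 2) (x y : Conf N) :
    reindex (confEquiv N) (confEquiv N) ((1 : Matrix (Fin 2) (Fin 2) R) ⊗ₖ M)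
      (Fin.cons b x) (Fin.cons c y) = if b = c then M x y else 0 := by
  simp [one_apply]

lemma reindex_kronecker_one_apply {N : ℕ} (A : Matrix (Fin 2 × Fin 2) (Fin 2 × Fin 2) R)
    (b₁ b₂ c₁ c₂ : Fin 2) (x y : Conf N) :
    reindex (confEquiv2 N) (confEquiv2 N) (A ⊗ₖ (1 : Matrix (Conf N) (Conf N) R))
      (Fin.cons b₁ (Fin.cons b₂ x)) (Fin.cons c₁ (Fin.cons c₂ y)) =
      if x = y then A (b₁, b₂) (c₁, c₂) else 0 := by
  simp [one_apply]

end

lemma Qg_add_two_apply {R : Type*} [CommRing R] (Ql : Matrix (Fin 2 × Fin 2) (Fin 2 × Fin 2) R)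
    (N : ℕ) (b₁ b₂ c₁ c₂ : Fin 2) (x y : Conf N) :
    Qg Ql (N + 2) (Fin.cons b₁ (Fin.cons b₂ x)) (Fin.cons c₁ (Fin.cons c₂ y)) =
      ∑ d, Qg Ql (N + 1) (Fin.cons b₂ x) (Fin.cons d y) * Ql (b₁, d) (c₁, c₂) := by
  rw [Qg, mul_apply, ← (confEquiv2 N).sum_comp]
  simp only [Fintype.sum_prod_type, confEquiv2_apply, reindex_one_kronecker_apply,
    reindex_kronecker_one_apply, ite_mul, mul_ite, zero_mul, mul_zero, Finset.sum_ite_irrel,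
    Finset.sum_const_zero, Finset.sum_ite_eq, Finset.sum_ite_eq', Finset.mem_univ, if_true]

/-- Entrywise form of the 4×4 block array: `(b₁b₂, c₁c₂)` selects the block, and
`(b₂, c₂)` selects which of `E, F, G, H` (the blocks of `Qg Ql (N + 1)`) appears in it. -/
theorem stmt1 (Ql : Matrix (Fin 2 × Fin 2) (Fin 2 × Fin 2) ℂ) (hvan : ∀ i j k l : Fin 2, j ≠ l → Ql (k, l) (i, j) = 0) (N : ℕ)
    (b₁ b₂ c₁ c₂ : Fin 2) (x y : Conf N) :
    Qg Ql (N + 2) (Fin.cons b₁ (Fin.cons b₂ x)) (Fin.cons c₁ (Fin.cons c₂ y)) =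
      Ql (b₁, c₂) (c₁, c₂) * Qg Ql (N + 1) (Fin.cons b₂ x) (Fin.cons c₂ y) := by
  rw [Qg_add_two_apply, Fintype.sum_eq_single c₂ fun d hd => by rw [hvan _ _ _ _ hd.symm, mul_zero],
    mul_comm]
end

section
/- With the block decomposition of Q_{N+1}^{(g)} into 2^N × 2^N blocks E_{N+1}, F_{N+1}, G_{N+1}, H_{N+1}, one has E_{N+1} + G_{N+1} = F_{N+1} + H_{N+1} = Q_N^{(g)}. -/
open Matrix Kronecker

lemma Qg_succ_apply {R : Type*} [CommRing R] (Ql : Matrix (Fin 2 × Fin 2) (Fin 2 × Fin 2) R)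
    (M : ℕ) (a0 b0 : Fin 2) (x y : Conf (M + 1)) :
    Qg Ql (M + 2) (Fin.cons a0 x) (Fin.cons b0 y)
      = ∑ z0 : Fin 2, Qg Ql (M + 1) x (Fin.cons z0 (Fin.tail y)) * Ql (a0, z0) (b0, y 0) := by
  show ((Matrix.reindex (confEquiv (M + 1)) (confEquiv (M + 1))
          ((1 : Matrix (Fin 2) (Fin 2) R) ⊗ₖ Qg Ql (M + 1))) *
      (Matrix.reindex (confEquiv2 M) (confEquiv2 M)
          (Ql ⊗ₖ (1 : Matrix (Conf M) (Conf M) R)))) _ _ = _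
  rw [Matrix.mul_apply, ← Equiv.sum_comp (confEquiv2 M)]
  rw [Fintype.sum_prod_type, Fintype.sum_prod_type]
  simp [confEquiv2, confEquiv, Matrix.one_apply, Fin.cons_inj, Fin.tail_cons,
    Finset.mul_sum, Finset.sum_mul]
  rfl

lemma key (Ql : Matrix (Fin 2 × Fin 2) (Fin 2 × Fin 2) ℂ)
    (hvan : ∀ i j k l : Fin 2, j ≠ l → Ql (k, l) (i, j) = 0)
    (hstoch : ∀ i j : Fin 2, Ql (0, j) (i, j) + Ql (1, j) (i, j) = 1)
    (M : ℕ) (b0 : Fin 2) (x y : Conf (M + 1)) :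
    Qg Ql (M + 2) (Fin.cons 0 x) (Fin.cons b0 y)
      + Qg Ql (M + 2) (Fin.cons 1 x) (Fin.cons b0 y) = Qg Ql (M + 1) x y := by
  rw [Qg_succ_apply, Qg_succ_apply, ← Finset.sum_add_distrib]
  have : ∀ z0 : Fin 2,
      Qg Ql (M + 1) x (Fin.cons z0 (Fin.tail y)) * Ql (0, z0) (b0, y 0)
        + Qg Ql (M + 1) x (Fin.cons z0 (Fin.tail y)) * Ql (1, z0) (b0, y 0)
      = if z0 = y 0 then Qg Ql (M + 1) x (Fin.cons z0 (Fin.tail y)) else 0 := by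
    intro z0
    rw [← mul_add]
    by_cases h : z0 = y 0
    · subst h; rw [hstoch, mul_one, if_pos rfl]
    · rw [hvan b0 (y 0) 0 z0 (Ne.symm h), hvan b0 (y 0) 1 z0 (Ne.symm h), add_zero,
        mul_zero, if_neg h]
  rw [Finset.sum_congr rfl fun z0 _ => this z0]
  simp [Fin.cons_self_tail]

/-- `E_{N+1} + G_{N+1} = F_{N+1} + H_{N+1} = Q_N^{(g)}` under the
transposed-stochastic condition. -/
theorem stmt2 (Ql : Matrix (Fin 2 × Fin 2) (Fin 2 × Fin 2) ℂ) (hvan : ∀ i j k l : Fin 2, j ≠ l → Ql (k, l) (i, j) = 0) (hstoch : ∀ i j : Fin 2, Ql (0, j) (i, j) + Ql (1, j) (i, j) = 1) (N : ℕ) (hN : 1 ≤ N) :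
    blockTL (Qg Ql (N + 1)) + blockBL (Qg Ql (N + 1)) = Qg Ql N ∧
    blockTR (Qg Ql (N + 1)) + blockBR (Qg Ql (N + 1)) = Qg Ql N := by
  obtain ⟨M, rfl⟩ : ∃ M, N = M + 1 := ⟨N - 1, (Nat.succ_pred_eq_of_pos hN).symm⟩
  constructor <;>
  · ext x y
    simp only [blockTL, blockBL, blockTR, blockBR, Matrix.add_apply, Matrix.of_apply]
    exact key Ql hvan hstoch M _ x y
end

section
/- For N > 1, the trace of the global operator is tr(Q_N^{(g)}) = Σ_{i_1,…,i_N ∈ {0,1}} a_{i_1 i_2}^{i_1 i_2} a_{i_2 i_3}^{i_2 i_3} ⋯ a_{i_{N-1} i_N}^{i_{N-1} i_N}. -/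
open Matrix Kronecker

lemma key_s4 (Ql : Matrix (Fin 2 × Fin 2) (Fin 2 × Fin 2) ℂ)
    (hvan : ∀ i j k l : Fin 2, j ≠ l → Ql (k, l) (i, j) = 0) :
    ∀ (N : ℕ) (i j : Conf (N + 1)),
      Qg Ql (N + 1) i j =
        (if i (Fin.last N) = j (Fin.last N) then 1 else 0) *
          ∏ m : Fin N, Ql (i m.castSucc, j m.succ) (j m.castSucc, j m.succ) := by
  intro N
  induction N with
  | zero =>
      intro i j
      simp [Qg, Matrix.one_apply, funext_iff, Fin.forall_fin_one]
  | succ N ih =>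
      intro i j
      have hmul : Qg Ql (N + 2) i j =
          ∑ k : Conf (N + 2),
            (Matrix.reindex (confEquiv (N + 1)) (confEquiv (N + 1))
              ((1 : Matrix (Fin 2) (Fin 2) ℂ) ⊗ₖ Qg Ql (N + 1))) i k *
            (Matrix.reindex (confEquiv2 N) (confEquiv2 N)
              (Ql ⊗ₖ (1 : Matrix (Conf N) (Conf N) ℂ))) k j := by
        rw [Qg]; exact Matrix.mul_apply
      rw [hmul, ← Equiv.sum_comp (confEquiv2 N)]
      have hsummand : ∀ x : (Fin 2 × Fin 2) × Conf N,
          (Matrix.reindex (confEquiv (N + 1)) (confEquiv (N + 1))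
              ((1 : Matrix (Fin 2) (Fin 2) ℂ) ⊗ₖ Qg Ql (N + 1))) i (confEquiv2 N x) *
            (Matrix.reindex (confEquiv2 N) (confEquiv2 N)
              (Ql ⊗ₖ (1 : Matrix (Conf N) (Conf N) ℂ))) (confEquiv2 N x) j =
          (if i 0 = x.1.1 then 1 else 0) *
            Qg Ql (N + 1) (Fin.tail i) (Fin.cons x.1.2 x.2) *
            (Ql (x.1.1, x.1.2) (j 0, Fin.tail j 0) *
              if x.2 = Fin.tail (Fin.tail j) then 1 else 0) := by
        intro x
        rfl
      simp only [hsummand]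
      rw [Fintype.sum_prod_type, Fintype.sum_prod_type]
      simp only [mul_ite, mul_one, mul_zero, ite_mul, zero_mul, one_mul,
        Finset.sum_ite_eq, Finset.sum_ite_eq', Finset.mem_univ, if_true]
      rw [Finset.sum_comm]
      simp only [Finset.sum_ite_eq, Finset.mem_univ, if_true]
      rw [Finset.sum_eq_single (Fin.tail j 0)
        (fun b _ hb => by rw [hvan (j 0) (Fin.tail j 0) (i 0) b (Ne.symm hb), mul_zero])
        (fun h => absurd (Finset.mem_univ _) h)]
      have hc : Fin.cons (Fin.tail j 0) (Fin.tail (Fin.tail j)) = Fin.tail j :=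
        Fin.cons_self_tail (Fin.tail j)
      rw [hc, ih]
      rw [Fin.prod_univ_succ]
      have h1 : Fin.tail i (Fin.last N) = i (Fin.last (N + 1)) := by
        simp [Fin.tail, Fin.succ_last]
      have h2 : Fin.tail j (Fin.last N) = j (Fin.last (N + 1)) := by
        simp [Fin.tail, Fin.succ_last]
      rw [h1, h2]
      have h3 : ∀ m : Fin N,
          Ql (Fin.tail i m.castSucc, Fin.tail j m.succ) (Fin.tail j m.castSucc, Fin.tail j m.succ)
            = Ql (i m.succ.castSucc, j m.succ.succ) (j m.succ.castSucc, j m.succ.succ) := by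
        intro m
        simp [Fin.tail, Fin.succ_castSucc, -Fin.castSucc_succ]
      rw [Finset.prod_congr rfl (fun m _ => h3 m)]
      have h4 : Ql (i 0, Fin.tail j 0) (j 0, Fin.tail j 0)
          = Ql (i (0 : Fin (N+1)).castSucc, j (0 : Fin (N+1)).succ)
              (j (0 : Fin (N+1)).castSucc, j (0 : Fin (N+1)).succ) := by
        simp [Fin.tail]
      rw [h4]
      ring_nf
      split <;> ring

/-- for `N > 1`,
`tr Q_N^{(g)} = ∑_{i₁,…,i_N} a_{i₁i₂}^{i₁i₂} a_{i₂i₃}^{i₂i₃} ⋯ a_{i_{N-1}i_N}^{i_{N-1}i_N}`. -/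
theorem stmt4 (Ql : Matrix (Fin 2 × Fin 2) (Fin 2 × Fin 2) ℂ) (hvan : ∀ i j k l : Fin 2, j ≠ l → Ql (k, l) (i, j) = 0) (N : ℕ) :
    Matrix.trace (Qg Ql (N + 2)) =
      ∑ i : Conf (N + 2), ∏ m : Fin (N + 1),
        Ql (i m.castSucc, i m.succ) (i m.castSucc, i m.succ) := by
  rw [Matrix.trace]
  refine Finset.sum_congr rfl fun i _ => ?_
  rw [Matrix.diag_apply, key_s4 Ql hvan (N + 1) i i, if_pos rfl, one_mul]
end

section
/- The characteristic polynomial of Q_{N+1}^{(g)} factors as det(λI − Q_{N+1}^{(g)}) = det(λI − Q_N^{(g)}) · det(λI − Q_N^{(g)} D_N), where D_N is the block-diagonal matrix diag((a10^10 − a10^00) I_{2^{N-1}}, (a11^11 − a11^01) I_{2^{N-1}}). Equivalently, Spec(Q_{N+1}^{(g)}) = Spec(Q_N^{(g)}) ∪ Spec(Q_N^{(g)} D_N) counted with multiplicity. -/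
open Matrix Kronecker

lemma Qg_apply_cons (Ql : Matrix (Fin 2 × Fin 2) (Fin 2 × Fin 2) ℂ)
    (hvan : ∀ i j k l : Fin 2, j ≠ l → Ql (k, l) (i, j) = 0) (N : ℕ)
    (k i : Fin 2) (x y : Conf (N+1)) :
    Qg Ql (N + 2) (Fin.cons k x) (Fin.cons i y) =
      Qg Ql (N + 1) x y * Ql (k, y 0) (i, y 0) := by
  rw [Qg]
  rw [Matrix.mul_apply]
  rw [← Equiv.sum_comp (confEquiv2 N)]
  simp only [confEquiv2, confEquiv, Equiv.trans_apply, Equiv.prodCongr_apply, Equiv.prodAssoc_apply,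
    Equiv.coe_refl, Prod.map, id, Fin.consEquiv_apply, Fin.consEquiv_symm_apply,
    reindex_apply, submatrix_apply, Equiv.symm_trans_apply, Equiv.prodCongr_symm,
    Equiv.prodAssoc_symm_apply, Fin.cons_zero, Fin.tail_cons, kroneckerMap_apply,
    Equiv.symm_symm, Equiv.symm_apply_apply]
  rw [Finset.sum_eq_single ((k, y 0), Fin.tail y)]
  · simp only [Equiv.refl_symm, Equiv.refl_apply, Fin.consEquiv_apply, Matrix.one_apply_eq,
      one_mul, mul_one]
    rw [show ((Fin.consEquiv fun _ => Fin 2) (y 0, Fin.tail y) : Conf (N+1)) = y from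
      Fin.cons_self_tail y]
  · rintro ⟨⟨m, l⟩, u⟩ - hne
    simp only [Equiv.refl_symm, Equiv.refl_apply, Fin.consEquiv_apply]
    by_cases hm : m = k
    · by_cases hl : l = y 0
      · have hu : u ≠ Fin.tail y := by
          intro h; exact hne (by simp [hm, hl, h])
        simp [Matrix.one_apply, hu]
      · rw [hvan i (y 0) m l (Ne.symm hl)]
        ring
    · have : (1 : Matrix (Fin 2) (Fin 2) ℂ) k m = 0 := Matrix.one_apply_ne (Ne.symm hm)
      change (1 : Matrix (Fin 2) (Fin 2) ℂ) k m * _ * _ = 0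
      rw [this]; ring
  · intro h; exact absurd (Finset.mem_univ _) h

/-- `Conf (N+1) ⊕ Conf (N+1) ≃ Conf (N+2)` splitting by the first bit. -/
def sumE (N : ℕ) : Conf (N + 1) ⊕ Conf (N + 1) ≃ Conf (N + 2) where
  toFun s := Sum.elim (fun x : Conf (N+1) => (Fin.cons 0 x : Conf (N+2)))
    (fun x : Conf (N+1) => (Fin.cons 1 x : Conf (N+2))) s
  invFun c := if c 0 = 0 then Sum.inl (Fin.tail c) else Sum.inr (Fin.tail c)
  left_inv := by
    rintro (x | x) <;>
      simp [Fin.cons_zero, Fin.tail_cons, show (1 : Fin 2) ≠ 0 by decide]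
  right_inv := by
    intro c
    by_cases h : c 0 = 0
    · simp only [if_pos h, Sum.elim_inl]
      rw [← h, Fin.cons_self_tail]
    · simp only [if_neg h, Sum.elim_inr]
      rw [← Fin.eq_one_of_ne_zero _ h, Fin.cons_self_tail]

lemma Qg_blocks (Ql : Matrix (Fin 2 × Fin 2) (Fin 2 × Fin 2) ℂ)
    (hvan : ∀ i j k l : Fin 2, j ≠ l → Ql (k, l) (i, j) = 0) (N : ℕ) :
    (Qg Ql (N + 2)).submatrix (sumE N) (sumE N) =
      Matrix.fromBlocks
        (Qg Ql (N+1) * Matrix.diagonal (fun c : Conf (N+1) => Ql (0, c 0) (0, c 0)))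
        (Qg Ql (N+1) * Matrix.diagonal (fun c : Conf (N+1) => Ql (0, c 0) (1, c 0)))
        (Qg Ql (N+1) * Matrix.diagonal (fun c : Conf (N+1) => Ql (1, c 0) (0, c 0)))
        (Qg Ql (N+1) * Matrix.diagonal (fun c : Conf (N+1) => Ql (1, c 0) (1, c 0))) := by
  ext a b
  rcases a with x | x <;> rcases b with y | y <;>
    simp only [submatrix_apply, sumE, Equiv.coe_fn_mk, Sum.elim_inl, Sum.elim_inr,
      fromBlocks_apply₁₁, fromBlocks_apply₁₂, fromBlocks_apply₂₁, fromBlocks_apply₂₂,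
      Qg_apply_cons Ql hvan, Matrix.mul_diagonal]


/-- `det(λI − Q_{N+1}^{(g)}) = det(λI − Q_N^{(g)}) · det(λI − Q_N^{(g)} D_N)`
with `D_N = diag((a₁₀¹⁰ − a₁₀⁰⁰)I, (a₁₁¹¹ − a₁₁⁰¹)I)` (blocks by first bit). -/
theorem stmt7 (Ql : Matrix (Fin 2 × Fin 2) (Fin 2 × Fin 2) ℂ) (hvan : ∀ i j k l : Fin 2, j ≠ l → Ql (k, l) (i, j) = 0) (hstoch : ∀ i j : Fin 2, Ql (0, j) (i, j) + Ql (1, j) (i, j) = 1) (N : ℕ) (z : ℂ) :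
    (z • (1 : Matrix (Conf (N + 2)) (Conf (N + 2)) ℂ) - Qg Ql (N + 2)).det =
      (z • (1 : Matrix (Conf (N + 1)) (Conf (N + 1)) ℂ) - Qg Ql (N + 1)).det *
      (z • (1 : Matrix (Conf (N + 1)) (Conf (N + 1)) ℂ) - Qg Ql (N + 1) *
        Matrix.diagonal (fun c : Conf (N + 1) =>
          if c 0 = 0 then Ql (1, 0) (1, 0) - Ql (1, 0) (0, 0)
          else Ql (1, 1) (1, 1) - Ql (1, 1) (0, 1))).det := by
  set Q := Qg Ql (N + 1) with hQ
  set A := Q * Matrix.diagonal (fun c : Conf (N+1) => Ql (0, c 0) (0, c 0)) with hA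
  set B := Q * Matrix.diagonal (fun c : Conf (N+1) => Ql (0, c 0) (1, c 0)) with hB
  set C := Q * Matrix.diagonal (fun c : Conf (N+1) => Ql (1, c 0) (0, c 0)) with hC
  set D := Q * Matrix.diagonal (fun c : Conf (N+1) => Ql (1, c 0) (1, c 0)) with hD
  have hAC : A + C = Q := by
    rw [hA, hC, ← Matrix.mul_add, Matrix.diagonal_add]
    have h : (fun c : Conf (N+1) => Ql (0, c 0) (0, c 0) + Ql (1, c 0) (0, c 0)) =
        fun _ => (1 : ℂ) := funext fun c => hstoch 0 (c 0)
    rw [h, Matrix.diagonal_one, Matrix.mul_one]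
  have hBD : B + D = Q := by
    rw [hB, hD, ← Matrix.mul_add, Matrix.diagonal_add]
    have h : (fun c : Conf (N+1) => Ql (0, c 0) (1, c 0) + Ql (1, c 0) (1, c 0)) =
        fun _ => (1 : ℂ) := funext fun c => hstoch 1 (c 0)
    rw [h, Matrix.diagonal_one, Matrix.mul_one]
  have hAB : A - B = Q * Matrix.diagonal (fun c : Conf (N + 1) =>
      if c 0 = 0 then Ql (1, 0) (1, 0) - Ql (1, 0) (0, 0)
      else Ql (1, 1) (1, 1) - Ql (1, 1) (0, 1)) := by
    rw [hA, hB, ← Matrix.mul_sub, Matrix.diagonal_sub]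
    refine congrArg (Q * ·) (congrArg Matrix.diagonal (funext fun c => ?_))
    have h0 := hstoch 0 (c 0)
    have h1 := hstoch 1 (c 0)
    by_cases h : c 0 = 0
    · rw [h] at h0 h1 ⊢
      rw [if_pos rfl]
      linear_combination h0 - h1
    · rw [Fin.eq_one_of_ne_zero _ h] at h0 h1 ⊢
      rw [if_neg (by norm_num : (1 : Fin 2) ≠ 0)]
      linear_combination h0 - h1
  have hC' : C = Q - A := by rw [← hAC]; abel
  have hD' : D = Q - B := by rw [← hBD]; abel
  rw [← Matrix.det_submatrix_equiv_self (sumE N)]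
  rw [show ((z • (1 : Matrix (Conf (N + 2)) (Conf (N + 2)) ℂ) - Qg Ql (N + 2)).submatrix
      (sumE N) (sumE N)) =
    z • ((1 : Matrix (Conf (N + 2)) (Conf (N + 2)) ℂ).submatrix (sumE N) (sumE N)) -
      (Qg Ql (N + 2)).submatrix (sumE N) (sumE N) from rfl]
  rw [Matrix.submatrix_one_equiv, Qg_blocks Ql hvan N, ← hQ, ← hA, ← hB, ← hC, ← hD]
  have key : z • (1 : Matrix (Conf (N+1) ⊕ Conf (N+1)) (Conf (N+1) ⊕ Conf (N+1)) ℂ) -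
      Matrix.fromBlocks A B C D =
      Matrix.fromBlocks 1 0 (-1) 1 *
      (Matrix.fromBlocks (z • 1 - A + B) (-B) 0 (z • 1 - Q) *
        Matrix.fromBlocks 1 0 1 1) := by
    apply Matrix.ext
    rintro (i | i) (j | j) <;>
      simp only [Matrix.fromBlocks_multiply, Matrix.fromBlocks_apply₁₁,
        Matrix.fromBlocks_apply₁₂, Matrix.fromBlocks_apply₂₁, Matrix.fromBlocks_apply₂₂,
        Matrix.one_mul, Matrix.mul_one, Matrix.zero_mul, Matrix.mul_zero, add_zero, zero_add,
        neg_one_mul, hC', hD', Matrix.add_apply, Matrix.neg_apply, Matrix.sub_apply,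
        Matrix.smul_apply, Matrix.one_apply, Sum.inl.injEq, Sum.inr.injEq, smul_eq_mul,
        if_false, mul_zero, reduceCtorEq] <;>
      ring
  rw [key, Matrix.det_mul, Matrix.det_mul, Matrix.det_fromBlocks_zero₂₁,
    Matrix.det_fromBlocks_zero₁₂, Matrix.det_fromBlocks_zero₁₂, Matrix.det_one,
    sub_add, hAB]
  ring
end

section
/- Suppose t := a10^10 − a10^00 = a11^11 − a11^01. Then the multiset of eigenvalues of Q_N^{(g)} is {t^k with multiplicity 2·C(N−1, k) : k = 0, 1, …, N−1}; equivalently, the characteristic polynomial of Q_N^{(g)} is ∏_{k=0}^{N-1} (λ − t^k)^{2 binom(N-1,k)}. -/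
open Matrix Kronecker

/-!
Split configurations by their first site. Then `Q_{N+2}` is the `2 × 2` block matrix with
blocks `Q_{N+1} Δₖᵢ`, where `Δₖᵢ` is diagonal with entries `a_{k,b}^{i,b}` (`b` the second
site). Column stochasticity gives `Δ₀ᵢ + Δ₁ᵢ = 1` and the hypothesis on `t` gives
`Δ₀₀ - Δ₀₁ = t`, so adding the first block row to the second and subtracting the second block
column from the first makes `z - s Q_{N+2}` block triangular:
`det (z - s Q_{N+2}) = det (z - s t Q_{N+1}) · det (z - s Q_{N+1})`.
Induction on `N`, with the scalar `s` free, and Pascal's rule give the product formula.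
-/

theorem Finset.prod_range_pow_choose_succ {M : Type*} [CommMonoid M] (f : ℕ → M) (N : ℕ) :
    ∏ k ∈ range (N + 2), f k ^ (N + 1).choose k =
      (∏ k ∈ range (N + 1), f (k + 1) ^ N.choose k) * ∏ k ∈ range (N + 1), f k ^ N.choose k := by
  rw [prod_range_succ']
  simp only [Nat.choose_succ_succ, pow_add, prod_mul_distrib, mul_assoc]
  congr 1
  rw [prod_range_succ, Nat.choose_succ_self, pow_zero, mul_one, prod_range_succ' _ N]
  simp

section BlockDeterminant

variable {n R : Type*} [Fintype n] [DecidableEq n] [CommRing R]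

theorem Matrix.det_fromBlocks_of_add_eq_add {A B C D : Matrix n n R} (h : A + C = B + D) :
    (fromBlocks A B C D).det = (A - B).det * (B + D).det := by
  obtain rfl : C = B + D - A := eq_sub_of_add_eq' h
  have hops : fromBlocks 1 0 1 1 * fromBlocks A B (B + D - A) D * fromBlocks 1 0 (-1) 1 =
      fromBlocks (A - B) B 0 (B + D) := by
    simp only [fromBlocks_multiply]
    congr 1 <;> simp [sub_eq_add_neg]
  rw [← det_fromBlocks_zero₂₁, ← hops]
  simp

theorem Matrix.det_smul_one_sub_smul_fromBlocks_mul (Q P₀₀ P₀₁ P₁₀ P₁₁ : Matrix n n R)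
    {t : R} (h₀ : P₀₀ + P₁₀ = 1) (h₁ : P₀₁ + P₁₁ = 1) (ht : P₀₀ - P₀₁ = t • 1) (s z : R) :
    (z • 1 - s • fromBlocks (Q * P₀₀) (Q * P₀₁) (Q * P₁₀) (Q * P₁₁)).det =
      (z • 1 - (s * t) • Q).det * (z • 1 - s • Q).det := by
  obtain rfl : P₁₀ = 1 - P₀₀ := eq_sub_of_add_eq' h₀
  obtain rfl : P₁₁ = 1 - P₀₁ := eq_sub_of_add_eq' h₁
  obtain rfl : P₀₀ = P₀₁ + t • 1 := eq_add_of_sub_eq' ht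
  rw [← fromBlocks_one, fromBlocks_smul, fromBlocks_smul, sub_eq_add_neg, fromBlocks_neg,
    fromBlocks_add, det_fromBlocks_of_add_eq_add]
  · congr 2 <;> simp [mul_add, mul_sub, smul_add, smul_sub, mul_smul] <;> abel
  · simp [mul_add, mul_sub, smul_add, smul_sub]; abel

end BlockDeterminant

section Qg

variable {R : Type*} [CommRing R] (Ql : Matrix (Fin 2 × Fin 2) (Fin 2 × Fin 2) R)

theorem confEquiv_symm_apply (N : ℕ) (x : Conf (N + 1)) :
    (confEquiv N).symm x = (x 0, Fin.tail x) := rfl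

theorem confEquiv2_symm_apply (N : ℕ) (x : Conf (N + 2)) :
    (confEquiv2 N).symm x = ((x 0, x 1), Fin.tail (Fin.tail x)) := rfl

theorem Qg_one : Qg Ql 1 = 1 := rfl

theorem Qg_add_two_apply_s8 (hvan : ∀ i j k l : Fin 2, j ≠ l → Ql (k, l) (i, j) = 0) (N : ℕ)
    (x y : Conf (N + 2)) :
    Qg Ql (N + 2) x y = Qg Ql (N + 1) (Fin.tail x) (Fin.tail y) * Ql (x 0, y 1) (y 0, y 1) := by
  -- the identity factors fix the first and last sites of the intermediate configuration `w`,
  -- and `hvan` forces its second site to be `y 1`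
  rw [Qg, mul_apply, Fintype.sum_eq_single (Fin.cons (x 0) (Fin.tail y))]
  all_goals simp only [reindex_apply, submatrix_apply, confEquiv_symm_apply, confEquiv2_symm_apply,
    kroneckerMap_apply, one_apply]
  · simp; rfl
  · intro w hw
    by_cases h0 : x 0 = w 0
    · by_cases h2 : Fin.tail (Fin.tail w) = Fin.tail (Fin.tail y)
      · have h1 : w 1 ≠ y 1 := by
          refine fun h1 => hw (funext fun i => Fin.cases h0.symm (fun j => ?_) i)
          exact Fin.cases h1 (fun k => congrFun h2 k) j
        rw [hvan _ _ _ _ h1.symm]; simp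
      · simp [h2]
    · simp [h0]

def confSplit (N : ℕ) : Conf (N + 1) ≃ Conf N ⊕ Conf N :=
  (confEquiv N).symm.trans
    ((finTwoEquiv.prodCongr (Equiv.refl (Conf N))).trans (Equiv.boolProdEquivSum (Conf N)))

def siteDiagonal (k i : Fin 2) (N : ℕ) : Matrix (Conf (N + 1)) (Conf (N + 1)) R :=
  diagonal fun v => Ql (k, v 0) (i, v 0)

theorem Qg_add_two_eq_submatrix (hvan : ∀ i j k l : Fin 2, j ≠ l → Ql (k, l) (i, j) = 0)
    (N : ℕ) :
    Qg Ql (N + 2) =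
      (fromBlocks (Qg Ql (N + 1) * siteDiagonal Ql 0 0 N) (Qg Ql (N + 1) * siteDiagonal Ql 0 1 N)
        (Qg Ql (N + 1) * siteDiagonal Ql 1 0 N) (Qg Ql (N + 1) * siteDiagonal Ql 1 1 N)).submatrix
        (confSplit (N + 1)) (confSplit (N + 1)) := by
  ext x y
  induction x using Fin.consCases with | cons a u => ?_
  induction y using Fin.consCases with | cons b v => ?_
  fin_cases a <;> fin_cases b <;>
    simp [Qg_add_two_apply_s8 Ql hvan, confSplit, confEquiv_symm_apply, siteDiagonal, finTwoEquiv]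

theorem siteDiagonal_zero_add_one (hstoch : ∀ i j : Fin 2, Ql (0, j) (i, j) + Ql (1, j) (i, j) = 1)
    (i : Fin 2) (N : ℕ) : siteDiagonal Ql 0 i N + siteDiagonal Ql 1 i N = 1 := by
  simp [siteDiagonal, hstoch, ← diagonal_one]

theorem siteDiagonal_zero_zero_sub (hstoch : ∀ i j : Fin 2, Ql (0, j) (i, j) + Ql (1, j) (i, j) = 1)
    {t : R} (ht₁ : t = Ql (1, 0) (1, 0) - Ql (1, 0) (0, 0))
    (ht₂ : t = Ql (1, 1) (1, 1) - Ql (1, 1) (0, 1)) (N : ℕ) :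
    siteDiagonal Ql 0 0 N - siteDiagonal Ql 0 1 N = t • 1 := by
  have hsite : ∀ b : Fin 2, Ql (0, b) (0, b) - Ql (0, b) (1, b) = t := Fin.forall_fin_two.mpr
    ⟨by linear_combination hstoch 0 0 - hstoch 1 0 - ht₁,
      by linear_combination hstoch 0 1 - hstoch 1 1 - ht₂⟩
  rw [siteDiagonal, siteDiagonal, diagonal_sub, smul_one_eq_diagonal]
  exact congrArg diagonal (funext fun v => hsite (v 0))

theorem det_smul_one_sub_smul_Qg_add_two
    (hvan : ∀ i j k l : Fin 2, j ≠ l → Ql (k, l) (i, j) = 0)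
    (hstoch : ∀ i j : Fin 2, Ql (0, j) (i, j) + Ql (1, j) (i, j) = 1)
    {t : R} (ht₁ : t = Ql (1, 0) (1, 0) - Ql (1, 0) (0, 0))
    (ht₂ : t = Ql (1, 1) (1, 1) - Ql (1, 1) (0, 1)) (N : ℕ) (s z : R) :
    (z • 1 - s • Qg Ql (N + 2)).det =
      (z • 1 - (s * t) • Qg Ql (N + 1)).det * (z • 1 - s • Qg Ql (N + 1)).det := by
  rw [Qg_add_two_eq_submatrix Ql hvan, ← submatrix_one_equiv (confSplit (N + 1))]
  exact (det_submatrix_equiv_self _ _).trans <| det_smul_one_sub_smul_fromBlocks_mul _ _ _ _ _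
    (siteDiagonal_zero_add_one Ql hstoch 0 N) (siteDiagonal_zero_add_one Ql hstoch 1 N)
    (siteDiagonal_zero_zero_sub Ql hstoch ht₁ ht₂ N) s z

theorem det_smul_one_sub_smul_Qg
    (hvan : ∀ i j k l : Fin 2, j ≠ l → Ql (k, l) (i, j) = 0)
    (hstoch : ∀ i j : Fin 2, Ql (0, j) (i, j) + Ql (1, j) (i, j) = 1)
    {t : R} (ht₁ : t = Ql (1, 0) (1, 0) - Ql (1, 0) (0, 0))
    (ht₂ : t = Ql (1, 1) (1, 1) - Ql (1, 1) (0, 1)) (N : ℕ) (s z : R) :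
    (z • 1 - s • Qg Ql (N + 1)).det =
      ∏ k ∈ Finset.range (N + 1), (z - s * t ^ k) ^ (2 * N.choose k) := by
  induction N generalizing s with
  | zero => simp [Qg_one, ← sub_smul]
  | succ N ih =>
    rw [det_smul_one_sub_smul_Qg_add_two Ql hvan hstoch ht₁ ht₂, ih, ih]
    simp only [pow_mul]
    rw [Finset.prod_range_pow_choose_succ]
    simp only [pow_succ', mul_assoc]

end Qg

/-- if `t = a₁₀¹⁰ − a₁₀⁰⁰ = a₁₁¹¹ − a₁₁⁰¹`, the characteristic polynomial of
`Q_N^{(g)}` is `∏_{k=0}^{N-1} (λ − t^k)^{2·C(N-1,k)}`. -/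
theorem stmt8 (Ql : Matrix (Fin 2 × Fin 2) (Fin 2 × Fin 2) ℂ) (hvan : ∀ i j k l : Fin 2, j ≠ l → Ql (k, l) (i, j) = 0) (hstoch : ∀ i j : Fin 2, Ql (0, j) (i, j) + Ql (1, j) (i, j) = 1) (t : ℂ)
    (ht₁ : t = Ql (1, 0) (1, 0) - Ql (1, 0) (0, 0))
    (ht₂ : t = Ql (1, 1) (1, 1) - Ql (1, 1) (0, 1)) (N : ℕ) (z : ℂ) :
    (z • (1 : Matrix (Conf (N + 1)) (Conf (N + 1)) ℂ) - Qg Ql (N + 1)).det =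
      ∏ k ∈ Finset.range (N + 1), (z - t ^ k) ^ (2 * Nat.choose N k) := by
  simpa using det_smul_one_sub_smul_Qg Ql hvan hstoch ht₁ ht₂ N 1 z
end
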